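/- Let α, β, N, C be positive reals and q ≥ 2 an integer. Then the infimum over ρ ∈ (0,1) of cost*(N,C,q,ρ) = αC + βN·ρ/cap(q,ρ) is strictly greater than the infimum over ρ ∈ (0,1) of cost*(N,C,q+1,ρ) = αC + βN·ρ/cap(q+1,ρ). -/

import Mathlib

open Filter

/-- The length-`C` prefix of the cyclically alternating sequence `1,2,…,q,1,2,…,q,…`:
its `i`-th symbol (1-indexed) is `((i-1) mod q) + 1`. -/
def altSeq (q C : ℕ) : List ℕ := (List.range C).map (fun i => i % q + 1)

/-- `M q C L`: the number of distinct length-`L` subsequences of `altSeq q C`. -/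
def M (q C L : ℕ) : ℕ :=
  ((altSeq q C).sublists.toFinset.filter (fun s => s.length = L)).card

/-- `cap q ρ = limsup_{C→∞} log₂ M_q(C, ⌊ρC⌋) / C`. -/
noncomputable def cap (q : ℕ) (ρ : ℝ) : ℝ :=
  Filter.atTop.limsup (fun C : ℕ => Real.logb 2 (M q C ⌊ρ * C⌋₊) / C)

/-- The optimal achievable cost $\mathsf{cost}^*(N,C,q,\rho) = \alpha C + \beta N \rho/\mathsf{cap}(q,\rho)$. -/
noncomputable def cost (α β N C : ℝ) (q : ℕ) (ρ : ℝ) : ℝ :=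
  α * C + β * N * (ρ / cap q ρ)

open List

lemma altSeq_q (q : ℕ) : altSeq q q = range' 1 q := by
  unfold altSeq
  rw [show range' 1 q = (range q).map (· + 1) by
    rw [List.range'_eq_map_range]; simp [Nat.add_comm]]
  exact List.map_congr_left fun i hi => by
    simp [Nat.mod_eq_of_lt (List.mem_range.mp hi)]

lemma altSeq_add (q k : ℕ) : altSeq q (q + k) = altSeq q q ++ altSeq q k := by
  unfold altSeq
  rw [List.range_add, List.map_append, List.map_map]
  congr 1
  exact List.map_congr_left fun i _ => by simp [Nat.add_mod_left]

lemma altSeq_mul (q m : ℕ) : altSeq q (q * m) = (List.replicate m (range' 1 q)).flatten := by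
  induction m with
  | zero => simp [altSeq]
  | succ n ih =>
    rw [Nat.mul_succ, Nat.add_comm, altSeq_add, altSeq_q, ih]
    simp [List.replicate_succ]

lemma altSeq_prefix {q C C' : ℕ} (h : C' ≤ C) : altSeq q C' <+: altSeq q C := by
  unfold altSeq
  obtain ⟨k, rfl⟩ := Nat.exists_eq_add_of_le h
  rw [List.range_add, List.map_append]
  exact List.prefix_append _ _

/-- suffix `[j+1, …, q]` of the block `[1,…,q]`. -/
def Sfx (q j : ℕ) : List ℕ := range' (j+1) (q - j)

def cat (q : ℕ) (v : List ℕ) : List ℕ := (v.map (Sfx q)).flatten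

lemma Sfx_sublist (q j : ℕ) : Sfx q j <+ range' 1 q := by
  rcases Nat.le_total j q with h | h
  · have heq : range' 1 j ++ range' (1 + j) (q - j) = range' 1 q := by
      have : range' 1 j 1 ++ range' (1 + 1 * j) (q - j) 1 = range' 1 (j + (q - j)) 1 := List.range'_append
      simp only [Nat.one_mul] at this
      rw [this]; congr 1; omega
    rw [← heq, Nat.add_comm 1 j]
    exact List.sublist_append_right _ _
  · simp [Sfx, Nat.sub_eq_zero_of_le h]

lemma cat_sublist (q : ℕ) (v : List ℕ) :
    cat q v <+ (List.replicate v.length (range' 1 q)).flatten := by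
  induction v with
  | nil => simp [cat]
  | cons j v ih =>
    simp only [cat, List.map_cons, List.flatten_cons, List.length_cons, List.replicate_succ]
    exact List.Sublist.append (Sfx_sublist q j) ih

lemma cat_length (q : ℕ) (v : List ℕ) (hv : ∀ j ∈ v, j ≤ q) :
    (cat q v).length = q * v.length - v.sum := by
  induction v with
  | nil => simp [cat]
  | cons j v ih =>
    have hj : j ≤ q := hv j (by simp)
    have hsum : v.sum ≤ q * v.length := by
      have := List.sum_le_card_nsmul v q (fun i hi => hv i (by simp [hi]))
      simpa [Nat.mul_comm, smul_eq_mul] using this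
    simp only [cat, List.map_cons, List.flatten_cons, List.length_append, List.length_cons]
    rw [show cat q v = (v.map (Sfx q)).flatten from rfl] at ih
    rw [ih (fun i hi => hv i (by simp [hi]))]
    simp only [Sfx, List.length_range', List.sum_cons, Nat.mul_succ]
    omega

lemma cat_head {q j : ℕ} (hj : j < q) (v : List ℕ) :
    (cat q (j :: v)).head? = some (j+1) := by
  obtain ⟨n, hn⟩ : ∃ n, q - j = n + 1 := ⟨q - j - 1, by omega⟩
  simp [cat, Sfx, hn, List.range'_succ]

lemma cat_injOn (q : ℕ) : ∀ (v w : List ℕ), (∀ j ∈ v, j < q) → (∀ j ∈ w, j < q) →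
    cat q v = cat q w → v = w := by
  intro v
  induction v with
  | nil =>
    intro w _ hw h
    cases w with
    | nil => rfl
    | cons j w =>
      have := cat_head (hw j (by simp)) w
      rw [← h] at this
      simp [cat] at this
  | cons j v ih =>
    intro w hv hw h
    cases w with
    | nil =>
      have := cat_head (hv j (by simp)) v
      rw [h] at this
      simp [cat] at this
    | cons j' w =>
      have h1 := cat_head (hv j (by simp)) v
      have h2 := cat_head (hw j' (by simp)) w
      rw [h, h2] at h1
      have hjj : j = j' := by injection h1 with h1'; omega
      subst hjj
      congr 1
      have h3 : Sfx q j ++ cat q v = Sfx q j ++ cat q w := h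
      have h4 : cat q v = cat q w := by
        simpa using h3
      rw [ih w (fun i hi => hv i (by simp [hi])) (fun i hi => hw i (by simp [hi])) h4]

def padSum (c : ℕ) : ℕ → ℕ → List ℕ
  | 0, _ => []
  | n+1, R => min R c :: padSum c n (R - min R c)

lemma padSum_length (c n R : ℕ) : (padSum c n R).length = n := by
  induction n generalizing R with
  | zero => rfl
  | succ n ih => simp [padSum, ih]

lemma padSum_le (c n R : ℕ) : ∀ j ∈ padSum c n R, j ≤ c := by
  induction n generalizing R with
  | zero => simp [padSum]
  | succ n ih =>
    intro j hj
    simp only [padSum, List.mem_cons] at hj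
    rcases hj with rfl | hj
    · omega
    · exact ih _ j hj

lemma padSum_sum {c n R : ℕ} (h : R ≤ c * n) : (padSum c n R).sum = R := by
  induction n generalizing R with
  | zero => simp at h; simp [padSum, h]
  | succ n ih =>
    simp only [padSum, List.sum_cons]
    rw [Nat.mul_succ] at h
    rw [ih (by omega)]
    omega

lemma mem_M_finset {q m : ℕ} (v : List ℕ) (hlen : v.length = m) (hle : ∀ j ∈ v, j ≤ q - 1)
    (hq : 1 ≤ q) :
    cat q v ∈ (altSeq q (q*m)).sublists.toFinset.filter (fun s => s.length = q*m - v.sum) := by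
  rw [Finset.mem_filter, List.mem_toFinset, List.mem_sublists]
  constructor
  · rw [altSeq_mul, ← hlen]
    exact cat_sublist q v
  · rw [cat_length q v (fun j hj => le_trans (hle j hj) (Nat.sub_le q 1)), hlen]

lemma one_le_M {q C L : ℕ} (h : L ≤ C) : 1 ≤ M q C L := by
  have : 0 < (Finset.filter (fun s => s.length = L) (altSeq q C).sublists.toFinset).card := by
    rw [Finset.card_pos]
    refine ⟨(altSeq q C).take L, ?_⟩
    rw [Finset.mem_filter, List.mem_toFinset, List.mem_sublists]
    refine ⟨List.take_sublist _ _, ?_⟩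
    rw [List.length_take]
    simp only [altSeq, List.length_map, List.length_range]
    omega
  rw [M]; omega

lemma pow_le_M {q m D k : ℕ} (hq : 2 ≤ q) (h1 : k * (q-1) ≤ D)
    (h2 : k * (q-1) ≤ (q-1) * m - D) : 2 ^ k ≤ M q (q*m) (q*m - D) := by
  rcases Nat.eq_zero_or_pos k with rfl | hk
  · simpa using one_le_M (Nat.sub_le _ _)
  obtain ⟨r, hr⟩ : ∃ r, q = r + 1 + 1 := ⟨q - 2, by omega⟩
  subst hr
  set q := r + 1 + 1 with hqdef
  have hq1 : q - 1 = r + 1 := rfl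
  rw [hq1] at h1 h2
  have hD : D + k * (r+1) ≤ (r+1) * m := by
    rcases Nat.le_total D ((r+1)*m) with h | h
    · omega
    · exfalso
      have : (r+1)*m - D = 0 := by omega
      rw [this, Nat.le_zero, Nat.mul_eq_zero] at h2
      omega
  have hkm : k ≤ m := by
    have : k * (r+1) ≤ m * (r+1) := by
      calc k * (r+1) ≤ (r+1) * m := le_trans (Nat.le_add_left _ _) hD
        _ = m * (r+1) := Nat.mul_comm _ _
    exact Nat.le_of_mul_le_mul_right this (by omega)
  set e : ℕ := D / m with he
  have hm : 1 ≤ m := le_trans hk hkm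
  have hDlt : D < (r+1) * m := by
    have : 1 ≤ k * (r+1) := Nat.one_le_iff_ne_zero.mpr (by positivity)
    omega
  have heq : e + 1 ≤ r + 1 := by
    have : e < r + 1 := Nat.div_lt_of_lt_mul (by rw [Nat.mul_comm]; exact hDlt)
    omega
  have hemD : m * e ≤ D := by rw [Nat.mul_comm]; exact Nat.div_mul_le_self D m
  -- the map
  set f : Finset (Fin k) → List ℕ := fun S =>
    (List.ofFn (fun i : Fin k => if i ∈ S then e+1 else e)) ++
      padSum (r+1) (m-k) (D - (k*e + S.card)) with hf
  have hsumite : ∀ S : Finset (Fin k),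
      (List.ofFn (fun i : Fin k => if i ∈ S then e+1 else e)).sum = k*e + S.card := by
    intro S
    rw [List.sum_ofFn]
    have : ∀ i : Fin k, (if i ∈ S then e+1 else e) = e + (if i ∈ S then 1 else 0) := by
      intro i; split <;> omega
    rw [Finset.sum_congr rfl (fun i _ => this i), Finset.sum_add_distrib,
      Finset.sum_const, Finset.sum_ite_mem, Finset.univ_inter, Finset.sum_const]
    simp [Nat.mul_comm]
  have hfree_le : ∀ S : Finset (Fin k), k*e + S.card ≤ D := by
    intro S
    have h3 : S.card ≤ k := by simpa using Finset.card_le_card (Finset.subset_univ S)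
    calc k*e + S.card ≤ k*e + k := by omega
      _ = k * (e+1) := by ring
      _ ≤ k * (r+1) := Nat.mul_le_mul_left k heq
      _ ≤ D := h1
  have hR_le : ∀ S : Finset (Fin k), D - (k*e + S.card) ≤ (r+1) * (m-k) := by
    intro S
    have h5 : (r+1) * (m - k) = (r+1)*m - (r+1)*k := Nat.mul_sub ..
    have h6 : k * (r+1) = (r+1) * k := Nat.mul_comm ..
    rw [h5]
    omega
  -- properties of f S
  have hflen : ∀ S : Finset (Fin k), (f S).length = m := by
    intro S
    rw [hf]
    simp only [List.length_append, List.length_ofFn, padSum_length]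
    omega
  have hfle : ∀ S : Finset (Fin k), ∀ j ∈ f S, j ≤ q - 1 := by
    intro S j hj
    rw [hf] at hj
    simp only [List.mem_append, List.mem_ofFn] at hj
    rcases hj with ⟨i, hi⟩ | hj
    · rw [hq1]; split at hi <;> omega
    · rw [hq1]; exact padSum_le _ _ _ j hj
  have hfsum : ∀ S : Finset (Fin k), (f S).sum = D := by
    intro S
    rw [hf, List.sum_append, hsumite, padSum_sum (hR_le S)]
    have := hfree_le S
    omega
  have hinj : Set.InjOn (fun S => cat q (f S)) (Finset.univ.powerset : Finset (Finset (Fin k))) := by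
    intro S hS T hT hST
    have hvv : f S = f T := by
      refine cat_injOn q (f S) (f T) ?_ ?_ hST
      · intro j hj; have := hfle S j hj; omega
      · intro j hj; have := hfle T j hj; omega
    rw [hf] at hvv
    simp only at hvv
    have hoff : (List.ofFn (fun i : Fin k => if i ∈ S then e+1 else e))
        = (List.ofFn (fun i : Fin k => if i ∈ T then e+1 else e)) := by
      have := congrArg (List.take k) hvv
      simpa [List.take_left'] using this
    have hfun := List.ofFn_injective hoff
    ext i
    have := congrFun hfun i
    constructor <;> intro hmem <;> by_contra hnm <;> simp [hmem, hnm] at this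
  have hcard : ((Finset.univ.powerset : Finset (Finset (Fin k)))).card = 2^k := by
    simp
  calc (2:ℕ)^k = ((Finset.univ.powerset : Finset (Finset (Fin k)))).card := hcard.symm
    _ ≤ M q (q*m) (q*m - D) := by
        rw [M]
        apply Finset.card_le_card_of_injOn (fun S => cat q (f S)) _ hinj
        intro S _
        have h7 := mem_M_finset (f S) (hflen S) (hfle S) (by omega)
        rw [hfsum S] at h7
        exact h7

lemma mem_altSeq {q C x : ℕ} (hq : 1 ≤ q) (hx : x ∈ altSeq q C) : 1 ≤ x ∧ x ≤ q := by
  simp only [altSeq, List.mem_map, List.mem_range] at hx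
  obtain ⟨i, _, rfl⟩ := hx
  have := Nat.mod_lt i (show 0 < q by omega)
  omega

lemma M_le_pow {q : ℕ} (hq : 1 ≤ q) (C L : ℕ) : M q C L ≤ q ^ L := by
  rw [M]
  have hcard : q ^ L = Fintype.card (Fin L → Fin q) := by simp
  rw [hcard, ← Finset.card_univ]
  apply Finset.card_le_card_of_injOn
    (fun l => fun i : Fin L => (⟨(l.getD i 0 - 1) % q, Nat.mod_lt _ (by omega)⟩ : Fin q))
    (fun _ _ => Finset.mem_univ _)
  intro l₁ h₁ l₂ h₂ hgl
  simp only [Finset.coe_filter, Set.mem_setOf_eq, List.mem_toFinset, List.mem_sublists] at h₁ h₂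
  obtain ⟨hs₁, hl₁⟩ := h₁
  obtain ⟨hs₂, hl₂⟩ := h₂
  apply List.ext_getElem (by rw [hl₁, hl₂])
  intro i hi1 hi2
  have hiL : i < L := hl₁ ▸ hi1
  have hx₁ := mem_altSeq hq (hs₁.subset (l₁.getElem_mem hi1))
  have hx₂ := mem_altSeq hq (hs₂.subset (l₂.getElem_mem hi2))
  have hval := congrFun hgl ⟨i, hiL⟩
  simp only [Fin.mk.injEq] at hval
  rw [List.getD_eq_getElem l₁ 0 hi1, List.getD_eq_getElem l₂ 0 hi2] at hval
  have e1 : (l₁[i] - 1) % q = l₁[i] - 1 := Nat.mod_eq_of_lt (by omega)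
  have e2 : (l₂[i] - 1) % q = l₂[i] - 1 := Nat.mod_eq_of_lt (by omega)
  omega

lemma sublist_blocks {q : ℕ} (l : List ℕ) (hl : ∀ x ∈ l, 1 ≤ x ∧ x ≤ q) :
    l <+ (List.replicate l.length (range' 1 q)).flatten := by
  induction l with
  | nil => simp
  | cons x l ih =>
    simp only [List.length_cons, List.replicate_succ, List.flatten_cons]
    have h1 : [x] <+ range' 1 q := by
      rw [List.singleton_sublist, List.mem_range'_1]
      have := hl x (by simp)
      omega
    exact List.Sublist.append h1 (ih (fun y hy => hl y (by simp [hy])))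

lemma pow_le_M_of_mul_le {q C L : ℕ} (hq : 1 ≤ q) (h : q * L ≤ C) : q ^ L ≤ M q C L := by
  rw [M]
  have hcard : q ^ L = Fintype.card (Fin L → Fin q) := by simp
  rw [hcard, ← Finset.card_univ]
  apply Finset.card_le_card_of_injOn (fun fn => List.ofFn (fun i : Fin L => (fn i).val + 1))
  · intro fn _
    simp only [Finset.mem_coe, Finset.mem_filter, List.mem_toFinset, List.mem_sublists]
    refine ⟨?_, by simp⟩
    have h1 : List.ofFn (fun i : Fin L => (fn i).val + 1) <+ altSeq q (q * L) := by
      rw [altSeq_mul]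
      have := sublist_blocks (q := q) (List.ofFn (fun i : Fin L => (fn i).val + 1)) ?_
      · rw [List.length_ofFn] at this; exact this
      · intro x hx
        simp only [List.mem_ofFn] at hx
        obtain ⟨i, rfl⟩ := hx
        have h2 := (fn i).isLt
        omega
    exact h1.trans (altSeq_prefix h).sublist
  · intro f₁ _ f₂ _ hf
    simp only at hf
    have := List.ofFn_injective hf
    funext i
    have := congrFun this i
    omega

open Filter

section analytic

variable {q : ℕ} {ρ : ℝ}

lemma floor_le_self (hρ : ρ ≤ 1) (C : ℕ) : ⌊ρ * C⌋₊ ≤ C := by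
  calc ⌊ρ * C⌋₊ ≤ ⌊(C:ℝ)⌋₊ := Nat.floor_le_floor (by nlinarith [Nat.cast_nonneg (α := ℝ) C])
    _ = C := Nat.floor_natCast C

lemma f_nonneg (hρ : ρ ≤ 1) (C : ℕ) :
    0 ≤ Real.logb 2 (M q C ⌊ρ * C⌋₊) / C := by
  apply div_nonneg _ (Nat.cast_nonneg C)
  apply Real.logb_nonneg one_lt_two
  have := one_le_M (q := q) (floor_le_self hρ C)
  exact_mod_cast this

lemma f_le (hq : 1 ≤ q) (hρ0 : 0 ≤ ρ) (hρ : ρ ≤ 1) (C : ℕ) :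
    Real.logb 2 (M q C ⌊ρ * C⌋₊) / C ≤ ρ * Real.logb 2 q := by
  have hlogq : 0 ≤ Real.logb 2 q := Real.logb_nonneg one_lt_two (by exact_mod_cast hq)
  rcases Nat.eq_zero_or_pos C with rfl | hC
  · simp only [Nat.cast_zero, div_zero]
    positivity
  have hM1 : (1:ℝ) ≤ (M q C ⌊ρ * C⌋₊ : ℝ) := by exact_mod_cast one_le_M (floor_le_self hρ C)
  have hMle : (M q C ⌊ρ * C⌋₊ : ℝ) ≤ (q:ℝ) ^ (⌊ρ * C⌋₊) := by
    exact_mod_cast M_le_pow hq C ⌊ρ * C⌋₊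
  have hlog : Real.logb 2 (M q C ⌊ρ * C⌋₊) ≤ (⌊ρ * C⌋₊ : ℝ) * Real.logb 2 q := by
    calc Real.logb 2 (M q C ⌊ρ * C⌋₊) ≤ Real.logb 2 ((q:ℝ) ^ (⌊ρ * C⌋₊)) :=
          Real.logb_le_logb_of_le one_lt_two (by linarith) hMle
      _ = (⌊ρ * C⌋₊ : ℝ) * Real.logb 2 q := by rw [Real.logb_pow]
  have hCpos : (0:ℝ) < C := by exact_mod_cast hC
  rw [div_le_iff₀ hCpos]
  calc Real.logb 2 (M q C ⌊ρ * C⌋₊) ≤ (⌊ρ * C⌋₊ : ℝ) * Real.logb 2 q := hlog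
    _ ≤ (ρ * C) * Real.logb 2 q := by
        apply mul_le_mul_of_nonneg_right _ hlogq
        exact Nat.floor_le (by positivity)
    _ = ρ * Real.logb 2 q * C := by ring

lemma f_bddAbove (hq : 1 ≤ q) (hρ0 : 0 ≤ ρ) (hρ : ρ ≤ 1) :
    IsBoundedUnder (· ≤ ·) atTop (fun C : ℕ => Real.logb 2 (M q C ⌊ρ * C⌋₊) / C) :=
  isBoundedUnder_of ⟨ρ * Real.logb 2 q, f_le hq hρ0 hρ⟩

lemma cap_nonneg (hq : 1 ≤ q) (hρ0 : 0 ≤ ρ) (hρ : ρ ≤ 1) : 0 ≤ cap q ρ :=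
  le_limsup_of_frequently_le (Frequently.of_forall (f_nonneg hρ)) (f_bddAbove hq hρ0 hρ)

lemma cap_le (hq : 1 ≤ q) (hρ0 : 0 ≤ ρ) (hρ : ρ ≤ 1) : cap q ρ ≤ ρ * Real.logb 2 q := by
  apply limsup_le_of_le _ (Eventually.of_forall (f_le hq hρ0 hρ))
  exact IsBoundedUnder.isCoboundedUnder_le (isBoundedUnder_of ⟨0, f_nonneg hρ⟩)

end analytic

lemma cap_inv {q : ℕ} (hq : 2 ≤ q) :
    cap q (1/(q:ℝ)) = (1/(q:ℝ)) * Real.logb 2 q := by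
  have hq0 : (0:ℝ) < q := by exact_mod_cast Nat.lt_of_lt_of_le Nat.zero_lt_two hq
  have hρ0 : (0:ℝ) ≤ 1/(q:ℝ) := by positivity
  have hρ1 : (1:ℝ)/(q:ℝ) ≤ 1 := by
    rw [div_le_one hq0]; exact_mod_cast Nat.le_of_lt (Nat.lt_of_lt_of_le Nat.one_lt_two hq)
  refine le_antisymm (cap_le (by omega) hρ0 hρ1) ?_
  apply le_limsup_of_frequently_le _ (f_bddAbove (by omega) hρ0 hρ1)
  rw [Filter.frequently_atTop]
  intro a
  refine ⟨q * (a+1), by nlinarith [Nat.le_refl a], ?_⟩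
  set m := a + 1
  have hfl : ⌊(1/(q:ℝ)) * ((q*m : ℕ):ℝ)⌋₊ = m := by
    have : (1/(q:ℝ)) * ((q*m : ℕ):ℝ) = (m:ℝ) := by
      push_cast
      field_simp
    rw [this, Nat.floor_natCast]
  rw [hfl]
  have hM : ((q:ℝ))^m ≤ ((M q (q*m) m : ℕ):ℝ) := by
    exact_mod_cast pow_le_M_of_mul_le (by omega) (le_refl (q*m))
  have hpow : (0:ℝ) < (q:ℝ)^m := by positivity
  have hlog : (m:ℝ) * Real.logb 2 q ≤ Real.logb 2 (M q (q*m) m) := by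
    rw [← Real.logb_pow]
    exact Real.logb_le_logb_of_le one_lt_two hpow hM
  have hCpos : (0:ℝ) < ((q*m : ℕ):ℝ) := by
    have : 0 < q * m := by positivity
    exact_mod_cast this
  rw [le_div_iff₀ hCpos]
  calc (1/(q:ℝ)) * Real.logb 2 q * ((q*m : ℕ):ℝ) = (m:ℝ) * Real.logb 2 q := by
        push_cast
        field_simp
    _ ≤ Real.logb 2 (M q (q*m) m) := hlog

set_option maxHeartbeats 1600000 in
lemma cap_pos {q : ℕ} (hq : 2 ≤ q) {ρ : ℝ} (h0 : 0 < ρ) (h1 : ρ < 1) : 0 < cap q ρ := by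
  have hq0 : (0:ℝ) < q := by exact_mod_cast Nat.lt_of_lt_of_le Nat.zero_lt_two hq
  have hq2 : (2:ℝ) ≤ q := by exact_mod_cast hq
  have hlogq : 1 ≤ Real.logb 2 q := by
    have : Real.logb 2 2 ≤ Real.logb 2 q := Real.logb_le_logb_of_le one_lt_two two_pos hq2
    rwa [Real.logb_self_eq_one one_lt_two] at this
  rcases le_or_gt (ρ * q) 1 with hcase | hcase
  · -- small ρ : use q^L ≤ M
    have hδ : 0 < ρ/2 := by linarith
    refine lt_of_lt_of_le hδ (le_limsup_of_frequently_le ?_ (f_bddAbove (by omega) h0.le h1.le))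
    rw [Filter.frequently_atTop]
    intro a
    set N := max a (max 1 ⌈2/ρ⌉₊) with hN
    refine ⟨N, le_max_left _ _, ?_⟩
    have hN1 : 1 ≤ N := le_trans (le_max_left 1 _) (le_max_right a _)
    have hNρ : 2/ρ ≤ (N:ℝ) := by
      calc 2/ρ ≤ (⌈2/ρ⌉₊ : ℝ) := Nat.le_ceil _
        _ ≤ (N:ℝ) := by exact_mod_cast le_trans (le_max_right 1 _) (le_max_right a _)
    have hNpos : (0:ℝ) < N := by exact_mod_cast hN1
    set L := ⌊ρ * (N:ℕ)⌋₊ with hL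
    have hLle : (L:ℝ) ≤ ρ * N := Nat.floor_le (by positivity)
    have hLge : ρ * N - 1 ≤ (L:ℝ) := by
      have := Nat.lt_floor_add_one (ρ * (N:ℝ))
      push_cast at this ⊢
      linarith
    have hqL : q * L ≤ N := by
      have : ((q * L : ℕ):ℝ) ≤ (N:ℝ) := by
        push_cast
        nlinarith
      exact_mod_cast this
    have hM : ((q:ℝ))^L ≤ ((M q N L : ℕ):ℝ) := by exact_mod_cast pow_le_M_of_mul_le (by omega) hqL
    have hlog : (L:ℝ) ≤ Real.logb 2 (M q N L) := by
      calc (L:ℝ) = (L:ℝ) * 1 := by ring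
        _ ≤ (L:ℝ) * Real.logb 2 q := by
            apply mul_le_mul_of_nonneg_left hlogq (Nat.cast_nonneg L)
        _ = Real.logb 2 ((q:ℝ)^L) := by rw [Real.logb_pow]
        _ ≤ Real.logb 2 (M q N L) := Real.logb_le_logb_of_le one_lt_two (by positivity) hM
    rw [le_div_iff₀ hNpos]
    have h2N : 1 ≤ ρ * N / 2 := by
      rw [le_div_iff₀ (by norm_num : (0:ℝ) < 2)]
      rw [div_le_iff₀ h0] at hNρ
      linarith
    calc ρ/2 * (N:ℝ) = ρ * N - ρ * N / 2 := by ring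
      _ ≤ ρ * N - 1 := by linarith
      _ ≤ (L:ℝ) := hLge
      _ ≤ Real.logb 2 (M q N L) := hlog
  · -- large ρ : use composition counting
    set ε := min ((1-ρ)*q) (ρ*q - 1) with hε
    have hε0 : 0 < ε := by
      apply lt_min <;> nlinarith
    set δ := ε/(2*q*((q:ℝ)-1)) with hδ
    have hδ0 : 0 < δ := by
      apply div_pos hε0
      nlinarith
    refine lt_of_lt_of_le hδ0 (le_limsup_of_frequently_le ?_ (f_bddAbove (by omega) h0.le h1.le))
    rw [Filter.frequently_atTop]
    intro a
    set m := max (a+1) ⌈2*(q:ℝ)/ε⌉₊ with hm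
    have hm1 : 1 ≤ m := le_trans (by omega) (le_max_left (a+1) _)
    have hmε : 2*(q:ℝ)/ε ≤ (m:ℝ) := by
      have h9 : ⌈2*(q:ℝ)/ε⌉₊ ≤ m := le_max_right (a+1) _
      calc 2*(q:ℝ)/ε ≤ (⌈2*(q:ℝ)/ε⌉₊ : ℝ) := Nat.le_ceil _
        _ ≤ (m:ℝ) := by exact_mod_cast h9
    have hmεR : 2*(q:ℝ) ≤ ε * m := by
      rw [div_le_iff₀ hε0] at hmε
      linarith [mul_comm ε (m:ℝ)]
    refine ⟨q * m, by calc a ≤ a + 1 := by omega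
      _ ≤ m := le_max_left _ _
      _ ≤ q * m := Nat.le_mul_of_pos_left m (by omega), ?_⟩
    set C := q * m with hC
    have hCR : ((C:ℕ):ℝ) = (q:ℝ) * m := by push_cast [hC]; ring
    have hCpos : (0:ℝ) < (C:ℝ) := by
      rw [hCR]; positivity
    set L := ⌊ρ * (C:ℕ)⌋₊ with hL
    have hmpos : (0:ℝ) < m := by exact_mod_cast hm1
    have hLle : (L:ℝ) ≤ ρ * C := Nat.floor_le (by positivity)
    have hLge : ρ * C - 1 ≤ (L:ℝ) := by
      have := Nat.lt_floor_add_one (ρ * ((C:ℕ):ℝ))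
      push_cast at this ⊢
      linarith
    have hmL : m ≤ L := by
      apply Nat.le_floor
      rw [hCR]
      nlinarith
    have hLC : L < C := by
      have : (L:ℝ) < C := by nlinarith
      exact_mod_cast this
    set D := C - L with hD
    have hDR : (D:ℝ) = (C:ℝ) - L := by
      push_cast [hD, Nat.cast_sub hLC.le]
      ring
    have hq1m : (q-1) * m + m = C := by
      rw [hC, Nat.sub_one_mul]
      have : m ≤ q * m := Nat.le_mul_of_pos_left m (by omega)
      omega
    have hDle : D ≤ (q-1) * m := by omega
    have hsub : (q-1)*m - D = L - m := by omega
    set x := min D ((q-1)*m - D) with hx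
    set k := x / (q-1) with hk
    have hk1 : k * (q-1) ≤ D := le_trans (Nat.div_mul_le_self x (q-1)) (min_le_left _ _)
    have hk2 : k * (q-1) ≤ (q-1)*m - D := le_trans (Nat.div_mul_le_self x (q-1)) (min_le_right _ _)
    have hM := pow_le_M hq hk1 hk2
    have hCD : C - D = L := by omega
    rw [hCD] at hM
    -- real lower bound on x
    have hq1R : ((q-1:ℕ):ℝ) = (q:ℝ) - 1 := by
      push_cast [Nat.cast_sub (by omega : 1 ≤ q)]
      ring
    have hxD : (D:ℝ) ≥ ε * m - 1 := by
      have h2 : ε ≤ (1-ρ)*q := min_le_left _ _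
      have h3 : ε * m ≤ ((1-ρ)*q)*m := mul_le_mul_of_nonneg_right h2 hmpos.le
      have hLle' := hLle
      rw [hCR] at hLle'
      rw [hDR, hCR]
      nlinarith [h3, hLle']
    have hxL : (((q-1)*m - D : ℕ):ℝ) ≥ ε * m - 1 := by
      rw [hsub]
      have : ((L - m : ℕ):ℝ) = (L:ℝ) - m := by
        push_cast [Nat.cast_sub hmL]
        ring
      rw [this]
      have h2 : ε ≤ ρ*q - 1 := min_le_right _ _
      have h3 : ε * m ≤ (ρ*q-1)*m := mul_le_mul_of_nonneg_right h2 hmpos.le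
      have hLge' := hLge
      rw [hCR] at hLge'
      nlinarith [h3, hLge']
    have hxR : (x:ℝ) ≥ ε * m - 1 := by
      rw [hx]
      rcases min_cases D ((q-1)*m - D) with ⟨h, _⟩ | ⟨h, _⟩ <;> rw [h]
      · exact hxD
      · exact hxL
    -- lower bound on k
    have hq1pos : (0:ℝ) < (q:ℝ) - 1 := by linarith
    have hkR : (x:ℝ) - ((q:ℝ)-1) ≤ (k:ℝ) * ((q:ℝ)-1) := by
      have hdm : k * (q-1) + x % (q-1) = x := by
        rw [hk, Nat.mul_comm]
        exact Nat.div_add_mod x (q-1)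
      have hcast : (k:ℝ) * (((q-1:ℕ)):ℝ) + ((x % (q-1):ℕ):ℝ) = (x:ℝ) := by
        exact_mod_cast congrArg (Nat.cast : ℕ → ℝ) hdm
      rw [hq1R] at hcast
      have hmodR : ((x % (q-1) : ℕ):ℝ) ≤ (q:ℝ) - 1 := by
        rw [← hq1R]
        exact_mod_cast Nat.le_of_lt (Nat.mod_lt x (by omega))
      linarith
    have hlogM : (k:ℝ) ≤ Real.logb 2 (M q C L) := by
      have hMR : ((2:ℝ))^k ≤ ((M q C L : ℕ) : ℝ) := by exact_mod_cast hM
      calc (k:ℝ) = (k:ℝ) * Real.logb 2 2 := by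
            rw [Real.logb_self_eq_one one_lt_two]; ring
        _ = Real.logb 2 ((2:ℝ)^k) := by rw [Real.logb_pow]
        _ ≤ Real.logb 2 (M q C L) := Real.logb_le_logb_of_le one_lt_two (by positivity) hMR
    have hfin : δ * (C:ℝ) ≤ (k:ℝ) := by
      have e2 : ε * m ≤ 2 * ((k:ℝ)*((q:ℝ)-1)) := by linarith
      rw [show δ * ((C:ℕ):ℝ) = ε * m / (2*((q:ℝ)-1)) from by rw [hδ, hCR]; field_simp]
      rw [div_le_iff₀ (by linarith)]
      linarith
    rw [le_div_iff₀ hCpos]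
    linarith

theorem stmt18 (α β N C : ℝ) (hα : 0 < α) (hβ : 0 < β) (hN : 0 < N) (hC : 0 < C)
    (q : ℕ) (hq : 2 ≤ q) :
    sInf {x : ℝ | ∃ ρ ∈ Set.Ioo (0 : ℝ) 1, x = cost α β N C (q + 1) ρ} <
      sInf {x : ℝ | ∃ ρ ∈ Set.Ioo (0 : ℝ) 1, x = cost α β N C q ρ} := by
  have hβN : 0 < β * N := mul_pos hβ hN
  have hq2 : (2:ℝ) ≤ q := by exact_mod_cast hq
  have hlogq : 1 ≤ Real.logb 2 q := by
    have : Real.logb 2 2 ≤ Real.logb 2 q := Real.logb_le_logb_of_le one_lt_two two_pos hq2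
    rwa [Real.logb_self_eq_one one_lt_two] at this
  have hlogq_pos : 0 < Real.logb 2 q := by linarith
  have hlt : Real.logb 2 q < Real.logb 2 ((q:ℝ)+1) :=
    Real.logb_lt_logb one_lt_two (by linarith) (by linarith)
  have hlogq1_pos : 0 < Real.logb 2 ((q:ℝ)+1) := by linarith
  -- lower bound on all costs
  have hlb : ∀ (q' : ℕ), 1 ≤ q' → ∀ x ∈ {x : ℝ | ∃ ρ ∈ Set.Ioo (0 : ℝ) 1,
      x = cost α β N C q' ρ}, α * C ≤ x := by
    rintro q' hq' x ⟨ρ, ⟨hρ0, hρ1⟩, rfl⟩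
    have h1 : 0 ≤ ρ / cap q' ρ :=
      div_nonneg hρ0.le (cap_nonneg hq' hρ0.le hρ1.le)
    have : 0 ≤ β * N * (ρ / cap q' ρ) := by positivity
    rw [cost]
    linarith
  -- upper bound for q+1
  set ρ0 : ℝ := 1/((q:ℝ)+1) with hρ0def
  have hcast : ((q+1:ℕ):ℝ) = (q:ℝ)+1 := by push_cast; ring
  have hρ0mem : ρ0 ∈ Set.Ioo (0:ℝ) 1 := by
    constructor
    · positivity
    · rw [hρ0def, div_lt_one (by linarith)]
      linarith
  have hcapv : cap (q+1) ρ0 = ρ0 * Real.logb 2 ((q:ℝ)+1) := by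
    have := cap_inv (q := q+1) (by omega)
    rw [hcast] at this
    exact this
  have hcost0 : cost α β N C (q+1) ρ0 = α * C + β * N * (1 / Real.logb 2 ((q:ℝ)+1)) := by
    rw [cost, hcapv]
    congr 1
    congr 1
    rw [div_mul_eq_div_mul_one_div, div_self (by positivity : ρ0 ≠ 0), one_mul]
  have hub : sInf {x : ℝ | ∃ ρ ∈ Set.Ioo (0 : ℝ) 1, x = cost α β N C (q + 1) ρ} ≤
      α * C + β * N * (1 / Real.logb 2 ((q:ℝ)+1)) := by
    rw [← hcost0]
    exact csInf_le ⟨α * C, fun x hx => hlb (q+1) (by omega) x hx⟩ ⟨ρ0, hρ0mem, rfl⟩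
  -- lower bound for q
  have hlb2 : α * C + β * N * (1 / Real.logb 2 q) ≤
      sInf {x : ℝ | ∃ ρ ∈ Set.Ioo (0 : ℝ) 1, x = cost α β N C q ρ} := by
    refine le_csInf ⟨cost α β N C q (1/2), ?_⟩ ?_
    · exact ⟨1/2, ⟨by norm_num, by norm_num⟩, rfl⟩
    rintro b ⟨ρ, ⟨hρ0, hρ1⟩, rfl⟩
    have hcpos : 0 < cap q ρ := cap_pos hq hρ0 hρ1
    have hcle : cap q ρ ≤ ρ * Real.logb 2 q := cap_le (by omega) hρ0.le hρ1.le
    have hdiv : ρ / (ρ * Real.logb 2 q) ≤ ρ / cap q ρ :=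
      div_le_div_of_nonneg_left hρ0.le hcpos hcle
    have heq : ρ / (ρ * Real.logb 2 q) = 1 / Real.logb 2 q := by
      rw [div_mul_eq_div_mul_one_div, div_self (ne_of_gt hρ0), one_mul]
    rw [heq] at hdiv
    rw [cost]
    have := mul_le_mul_of_nonneg_left hdiv hβN.le
    linarith
  have hfinal : α * C + β * N * (1 / Real.logb 2 ((q:ℝ)+1)) <
      α * C + β * N * (1 / Real.logb 2 q) := by
    have h1 : 1 / Real.logb 2 ((q:ℝ)+1) < 1 / Real.logb 2 q :=
      one_div_lt_one_div_of_lt hlogq_pos hlt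
    have := mul_lt_mul_of_pos_left h1 hβN
    linarith
  linarith
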